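/- arXiv:1807.07030 — 2 statements merged into one kernel-verified Lean document; each statement's English description precedes it below -/
import Mathlib

section
/- Let G be a finite simple graph. Then pt_⌊Z⌋(G) = min{ pt_Z(H) : H is a spanning supergraph of G with Z(H) = ⌊Z⌋(G) }, where pt_Z(H) is the minimum of pt_Z(H;B) over all minimum standard zero forcing sets B of H. -/
open SimpleGraph

namespace ZFT

variable {V : Type*} {α : Type*} {β : Type*}

/-! ### Standard zero forcing (simultaneous propagation) -/

/-- One round of simultaneous standard zero forcing: a blue vertex forces its
unique white neighbor. -/
def zStep (G : SimpleGraph V) (S : Set V) : Set V :=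
  S ∪ {w | ∃ u ∈ S, G.Adj u w ∧ ∀ x, G.Adj u x → x ∉ S → x = w}

/-- `B` is a standard zero forcing set of `G`. -/
def IsZeroForcingSet (G : SimpleGraph V) (B : Set V) : Prop :=
  ∃ t : ℕ, (zStep G)^[t] B = Set.univ

/-- The standard propagation time `pt_Z(G;B)` (`⊤` if `B` is not a zero forcing set). -/
noncomputable def ptZ (G : SimpleGraph V) (B : Set V) : ℕ∞ :=
  sInf {n : ℕ∞ | ∃ t : ℕ, n = t ∧ (zStep G)^[t] B = Set.univ}

/-- The standard throttling number `th_Z(G;B) = |B| + pt_Z(G;B)`. -/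
noncomputable def thZ (G : SimpleGraph V) (B : Set V) : ℕ∞ :=
  (B.ncard : ℕ∞) + ptZ G B

/-- The standard throttling number `th_Z(G)`. -/
noncomputable def thZgraph (G : SimpleGraph V) : ℕ∞ :=
  sInf {n : ℕ∞ | ∃ B : Set V, IsZeroForcingSet G B ∧ n = thZ G B}

/-- The standard zero forcing number `Z(G)`. -/
noncomputable def Znum (G : SimpleGraph V) : ℕ :=
  sInf {k : ℕ | ∃ B : Set V, IsZeroForcingSet G B ∧ B.ncard = k}

/-- The standard propagation time `pt_Z(G)`, minimized over minimum zero forcing sets. -/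
noncomputable def ptZgraph (G : SimpleGraph V) : ℕ∞ :=
  sInf {n : ℕ∞ | ∃ B : Set V, IsZeroForcingSet G B ∧ B.ncard = Znum G ∧ n = ptZ G B}

/-! ### Sets of standard forces -/

/-- Validity of a single standard force `u → w` when `blue` is the blue set. -/
def zForceValid (G : SimpleGraph V) (blue : Set V) (u w : V) : Prop :=
  u ∈ blue ∧ w ∉ blue ∧ G.Adj u w ∧ ∀ x, G.Adj u x → x ∉ blue → x = w

/-- Validity of a chronological list of standard forces starting from a blue set. -/
def zValidList (G : SimpleGraph V) : Set V → List (V × V) → Prop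
  | _, [] => True
  | blue, p :: L => zForceValid G blue p.1 p.2 ∧ zValidList G (insert p.2 blue) L

/-- The blue set after performing all forces in a list, starting from `B`. -/
def endBlue (B : Set V) (L : List (V × V)) : Set V :=
  B ∪ {w | ∃ u, (u, w) ∈ L}

/-- The set of vertices that have performed a force in a list. -/
def endForced (L : List (V × V)) : Set V := {u | ∃ w, (u, w) ∈ L}

/-- `F` is a set of standard forces of `B` in `G` (recorded from a maximal
chronological list of forces). -/
def IsZForceSet (G : SimpleGraph V) (B : Set V) (F : Set (V × V)) : Prop :=
  ∃ L : List (V × V), zValidList G B L ∧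
    (∀ u w, ¬ zForceValid G (endBlue B L) u w) ∧ F = {p | p ∈ L}

/-- The set of blue vertices at time `t` when the forces of `F` are performed at the
earliest possible time steps, starting from `B` blue. -/
def zBlueAt (G : SimpleGraph V) (F : Set (V × V)) (B : Set V) : ℕ → Set V
  | 0 => B
  | t + 1 =>
      zBlueAt G F B t ∪ {w | ∃ v, (v, w) ∈ F ∧ zForceValid G (zBlueAt G F B t) v w}

/-- The standard propagation time `pt_Z(G;F)` of a set of forces `F` of `B`. -/
noncomputable def ptZofF (G : SimpleGraph V) (F : Set (V × V)) (B : Set V) : ℕ∞ :=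
  sInf {n : ℕ∞ | ∃ t : ℕ, n = t ∧ zBlueAt G F B t = Set.univ}

/-! ### `⌊Z⌋` (minor monotone floor) forcing -/

/-- Validity of a single `⌊Z⌋` force `u → w`: `u` is blue and has not yet forced, `w`
is white, and either `w` is the unique white neighbor of `u`, or all neighbors of `u`
are blue (a hop). -/
def zfForceValid (G : SimpleGraph V) (blue forced : Set V) (u w : V) : Prop :=
  u ∈ blue ∧ w ∉ blue ∧ u ∉ forced ∧
    ((G.Adj u w ∧ ∀ x, G.Adj u x → x ∉ blue → x = w) ∨ ∀ x, G.Adj u x → x ∈ blue)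

/-- Validity of a chronological list of `⌊Z⌋` forces. -/
def zfValidList (G : SimpleGraph V) : Set V → Set V → List (V × V) → Prop
  | _, _, [] => True
  | blue, forced, p :: L =>
      zfForceValid G blue forced p.1 p.2 ∧
        zfValidList G (insert p.2 blue) (insert p.1 forced) L

/-- `F` is a set of `⌊Z⌋` forces of `B` in `G` (recorded from a maximal chronological
list of `⌊Z⌋` forces starting with `B` blue). -/
def IsZFForceSet (G : SimpleGraph V) (B : Set V) (F : Set (V × V)) : Prop :=
  ∃ L : List (V × V), zfValidList G B ∅ L ∧
    (∀ u w, ¬ zfForceValid G (endBlue B L) (endForced L) u w) ∧ F = {p | p ∈ L}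

/-- The set of blue vertices at time `t` when the `⌊Z⌋` forces of `F` are performed at
the earliest possible time steps, starting from `B` blue. -/
def zfBlueAt (G : SimpleGraph V) (F : Set (V × V)) (B : Set V) : ℕ → Set V
  | 0 => B
  | t + 1 =>
      zfBlueAt G F B t ∪
        {w | ∃ v, (v, w) ∈ F ∧ v ∈ zfBlueAt G F B t ∧ w ∉ zfBlueAt G F B t ∧
          (∀ w', (v, w') ∈ F → w' ∈ zfBlueAt G F B t → w' ∈ B) ∧
          ((G.Adj v w ∧ ∀ x, G.Adj v x → x ∉ zfBlueAt G F B t → x = w) ∨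
            ∀ x, G.Adj v x → x ∈ zfBlueAt G F B t)}

/-- The `⌊Z⌋` propagation time `pt_⌊Z⌋(G;F)` of a set of `⌊Z⌋` forces `F` of `B`. -/
noncomputable def ptZFofF (G : SimpleGraph V) (F : Set (V × V)) (B : Set V) : ℕ∞ :=
  sInf {n : ℕ∞ | ∃ t : ℕ, n = t ∧ zfBlueAt G F B t = Set.univ}

/-- The `⌊Z⌋` propagation time `pt_⌊Z⌋(G;B)`, minimized over sets of `⌊Z⌋` forces of `B`. -/
noncomputable def ptZF (G : SimpleGraph V) (B : Set V) : ℕ∞ :=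
  sInf {n : ℕ∞ | ∃ F : Set (V × V), IsZFForceSet G B F ∧ n = ptZFofF G F B}

/-- The `⌊Z⌋` throttling number `th_⌊Z⌋(G;B) = |B| + pt_⌊Z⌋(G;B)`. -/
noncomputable def thZF (G : SimpleGraph V) (B : Set V) : ℕ∞ :=
  (B.ncard : ℕ∞) + ptZF G B

/-- The `⌊Z⌋` throttling number `th_⌊Z⌋(G)`, minimized over all `B ⊆ V(G)`. -/
noncomputable def thZFgraph (G : SimpleGraph V) : ℕ∞ :=
  sInf {n : ℕ∞ | ∃ B : Set V, n = thZF G B}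

/-- `B` is a `⌊Z⌋` forcing set of `G`. -/
def IsZFForcingSet (G : SimpleGraph V) (B : Set V) : Prop :=
  ∃ F : Set (V × V), IsZFForceSet G B F ∧ B ∪ {w | ∃ u, (u, w) ∈ F} = Set.univ

/-- The `⌊Z⌋` forcing number `⌊Z⌋(G)`. -/
noncomputable def ZFnum (G : SimpleGraph V) : ℕ :=
  sInf {k : ℕ | ∃ B : Set V, IsZFForcingSet G B ∧ B.ncard = k}

/-- The `⌊Z⌋` propagation time `pt_⌊Z⌋(G)`, minimized over minimum `⌊Z⌋` forcing sets. -/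
noncomputable def ptZFgraph (G : SimpleGraph V) : ℕ∞ :=
  sInf {n : ℕ∞ | ∃ B : Set V, IsZFForcingSet G B ∧ B.ncard = ZFnum G ∧ n = ptZF G B}

/-! ### Contractions, minors, and products -/

/-- The graph obtained from `H` by contracting (all) the edges in `C`: its vertices are
the connected components of the spanning subgraph of `H` with edge set `C ∩ E(H)`, and
two distinct components are adjacent iff `H` has an edge between them. -/
def contractEdges (H : SimpleGraph α) (C : Set (Sym2 α)) :
    SimpleGraph (SimpleGraph.fromEdgeSet C ⊓ H).ConnectedComponent where
  Adj c d := c ≠ d ∧ ∃ a b, H.Adj a b ∧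
      (SimpleGraph.fromEdgeSet C ⊓ H).connectedComponentMk a = c ∧
      (SimpleGraph.fromEdgeSet C ⊓ H).connectedComponentMk b = d
  symm := ⟨by
    rintro c d ⟨hcd, a, b, hab, ha, hb⟩
    exact ⟨hcd.symm, b, a, hab.symm, hb, ha⟩⟩
  loopless := ⟨fun c h => h.1 rfl⟩

/-- `G` is a minor of `H`: `G` is isomorphic to a subgraph of a graph obtained from an
induced subgraph of `H` by contracting a set of edges. -/
def IsMinor (G : SimpleGraph β) (H : SimpleGraph α) : Prop :=
  ∃ (s : Set α) (C : Set (Sym2 s))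
    (G'' : SimpleGraph (SimpleGraph.fromEdgeSet C ⊓ H.induce s).ConnectedComponent),
      G'' ≤ contractEdges (H.induce s) C ∧ Nonempty (G ≃g G'')

/-- The Cartesian product `K_a □ P_{b+1}`. -/
def prodKP (a b : ℕ) : SimpleGraph (Fin a × Fin (b + 1)) :=
  (⊤ : SimpleGraph (Fin a)) □ SimpleGraph.pathGraph (b + 1)

/-- The path edges of `K_a □ P_{b+1}` (edges within the copies of `P_{b+1}`). -/
def pathEdges (a b : ℕ) : Set (Sym2 (Fin a × Fin (b + 1))) :=
  {e | ∃ (i : Fin a) (j j' : Fin (b + 1)),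
    (SimpleGraph.pathGraph (b + 1)).Adj j j' ∧ e = s((i, j), (i, j'))}

/-- The complete edges of `K_a □ P_{b+1}` (edges within the copies of `K_a`). -/
def completeEdges (a b : ℕ) : Set (Sym2 (Fin a × Fin (b + 1))) :=
  {e | ∃ (i i' : Fin a) (j : Fin (b + 1)), i ≠ i' ∧ e = s((i, j), (i', j))}

/-- The star `K_{1,n-1}` on `n` vertices: vertex `0` is adjacent to all others. -/
def starGraph (n : ℕ) : SimpleGraph (Fin n) where
  Adj i j := i ≠ j ∧ ((i : ℕ) = 0 ∨ (j : ℕ) = 0)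
  symm := ⟨by rintro i j ⟨h1, h2⟩; exact ⟨h1.symm, h2.symm⟩⟩
  loopless := ⟨fun i h => h.1 rfl⟩

/-- The independence number `α(G)`. -/
noncomputable def indepNum (G : SimpleGraph V) : ℕ :=
  sSup {k : ℕ | ∃ s : Set V, (∀ a ∈ s, ∀ b ∈ s, a ≠ b → ¬ G.Adj a b) ∧ s.ncard = k}

/-
A ⌊Z⌋ process is a standard one in which, in addition, a vertex all of whose neighbors are
blue may force any white vertex (a hop). So a ⌊Z⌋ forcing set `B` of `G` with force set `F`
is a standard zero forcing set of `G` plus the edges of `F`, with at most the same propagation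
time: a white `F`-neighbor of a forcing vertex is either its own target or the vertex that
forced it, which is already blue. Conversely, a standard forcing process in a spanning
supergraph `H` of `G`, performed in `G` with the same forces in chronological order, is a ⌊Z⌋
process at least as fast, since each force of `H` is in `G` either a standard force or a hop.
In particular `⌊Z⌋(G) ≤ Z(H)` for all such `H`, with equality for `G` plus the edges of a
minimum ⌊Z⌋ process.
-/

section Monotonicity

variable (G : SimpleGraph V)

lemma subset_zStep (S : Set V) : S ⊆ zStep G S :=
  Set.subset_union_left

lemma zStep_iterate_mono (B : Set V) : Monotone fun t => (zStep G)^[t] B :=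
  monotone_nat_of_le_succ fun n => by
    rw [Function.iterate_succ_apply']
    exact subset_zStep G _

lemma zfBlueAt_mono (F : Set (V × V)) (B : Set V) : Monotone (zfBlueAt G F B) :=
  monotone_nat_of_le_succ fun _ => Set.subset_union_left

end Monotonicity

variable {G H : SimpleGraph V}

/-! ### From a `⌊Z⌋` process in `G` to a standard process in `G` plus the forcing edges -/

lemma mem_or_exists_force_of_mem_zfBlueAt {F : Set (V × V)} {B : Set V} {t : ℕ} {x : V}
    (hx : x ∈ zfBlueAt G F B t) :
    x ∈ B ∨ ∃ v, (v, x) ∈ F ∧ v ∈ zfBlueAt G F B t := by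
  induction t with
  | zero => exact Or.inl hx
  | succ n ih =>
    rcases hx with hx | ⟨v, hvx, hv, -⟩
    · exact (ih hx).imp_right fun ⟨v, hvx, hv⟩ => ⟨v, hvx, zfBlueAt_mono G F B n.le_succ hv⟩
    · exact Or.inr ⟨v, hvx, zfBlueAt_mono G F B n.le_succ hv⟩

lemma zfValidList.forall_mem {blue forced : Set V} {L : List (V × V)}
    (h : zfValidList G blue forced L) : ∀ p ∈ L, p.1 ∉ forced ∧ p.2 ∉ blue := by
  induction L generalizing blue forced with
  | nil => simp
  | cons p L ih =>
    obtain ⟨hp, hL⟩ := h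
    rintro q (_ | ⟨_, hq⟩)
    · exact ⟨hp.2.2.1, hp.2.1⟩
    · exact (ih hL q hq).imp (mt (Set.mem_insert_of_mem _)) (mt (Set.mem_insert_of_mem _))

lemma zfValidList.nodup_map_fst {blue forced : Set V} {L : List (V × V)}
    (h : zfValidList G blue forced L) : (L.map Prod.fst).Nodup := by
  induction L generalizing blue forced with
  | nil => simp
  | cons p L ih =>
    obtain ⟨-, hL⟩ := h
    refine List.nodup_cons.2 ⟨fun hp => ?_, ih hL⟩
    obtain ⟨q, hq, hqp⟩ := List.mem_map.1 hp
    exact (hL.forall_mem q hq).1 (hqp ▸ Set.mem_insert _ _)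

lemma zfValidList.nodup_map_snd {blue forced : Set V} {L : List (V × V)}
    (h : zfValidList G blue forced L) : (L.map Prod.snd).Nodup := by
  induction L generalizing blue forced with
  | nil => simp
  | cons p L ih =>
    obtain ⟨-, hL⟩ := h
    refine List.nodup_cons.2 ⟨fun hp => ?_, ih hL⟩
    obtain ⟨q, hq, hqp⟩ := List.mem_map.1 hp
    exact (hL.forall_mem q hq).2 (hqp ▸ Set.mem_insert _ _)

section IsZFForceSet

variable {B : Set V} {F : Set (V × V)}

lemma IsZFForceSet.snd_eq_of_mem (hF : IsZFForceSet G B F) {u w w' : V} (h : (u, w) ∈ F)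
    (h' : (u, w') ∈ F) : w = w' := by
  obtain ⟨L, hL, -, rfl⟩ := hF
  exact congrArg Prod.snd (List.inj_on_of_nodup_map hL.nodup_map_fst h h' rfl)

lemma IsZFForceSet.fst_eq_of_mem (hF : IsZFForceSet G B F) {u u' w : V} (h : (u, w) ∈ F)
    (h' : (u', w) ∈ F) : u = u' := by
  obtain ⟨L, hL, -, rfl⟩ := hF
  exact congrArg Prod.fst (List.inj_on_of_nodup_map hL.nodup_map_snd h h' rfl)

lemma IsZFForceSet.snd_notMem (hF : IsZFForceSet G B F) {u w : V} (h : (u, w) ∈ F) : w ∉ B := by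
  obtain ⟨L, hL, -, rfl⟩ := hF
  exact (hL.forall_mem _ h).2

lemma IsZFForceSet.zfBlueAt_subset_zStep_iterate (hF : IsZFForceSet G B F) (t : ℕ) :
    zfBlueAt G F B t ⊆ (zStep (G ⊔ fromRel fun a b => (a, b) ∈ F))^[t] B := by
  induction t with
  | zero => exact subset_rfl
  | succ n ih =>
    rw [Function.iterate_succ_apply']
    rintro x (hx | ⟨v, hvx, hv, hx, -, hrule⟩)
    · exact subset_zStep _ _ (ih hx)
    refine Or.inr ⟨v, ih hv, Or.inr ((fromRel_adj _ _ _).2 ⟨fun h => hx (h ▸ hv), .inl hvx⟩),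
      fun y hvy hyS => ?_⟩
    have hy : y ∉ zfBlueAt G F B n := fun h => hyS (ih h)
    rcases (sup_adj _ _ _ _).1 hvy with hvy | hvy
    · rcases hrule with ⟨-, huniq⟩ | hall
      · exact huniq y hvy hy
      · exact absurd (hall y hvy) hy
    obtain ⟨-, hvy | hyv⟩ := (fromRel_adj _ _ _).1 hvy
    · exact hF.snd_eq_of_mem hvy hvx
    -- `y` forced `v`, so it was blue before `v` was
    rcases mem_or_exists_force_of_mem_zfBlueAt hv with hvB | ⟨v', hv'v, hv'⟩
    · exact absurd hvB (hF.snd_notMem hyv)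
    · exact absurd (hF.fst_eq_of_mem hv'v hyv ▸ hv') hy

end IsZFForceSet

/-! ### From a standard process in a spanning supergraph `H` to a `⌊Z⌋` process in `G` -/

lemma exists_zForceValid_of_mem_zStep_iterate {B : Set V} {t : ℕ} {w : V}
    (hw : w ∈ (zStep H)^[t] B) (hwB : w ∉ B) :
    ∃ m u, zForceValid H ((zStep H)^[m] B) u w := by
  induction t with
  | zero => exact absurd hw hwB
  | succ n ih =>
    rw [Function.iterate_succ_apply'] at hw
    by_cases hwn : w ∈ (zStep H)^[n] B
    · exact ih hwn
    rcases hw with hw | ⟨u, hu, huw, huniq⟩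
    · exact absurd hw hwn
    · exact ⟨n, u, hu, hwn, huw, huniq⟩

lemma zForceValid.eq_of_subset {S S' : Set V} {u w w' : V} (h : zForceValid H S u w)
    (h' : zForceValid H S' u w') (hSS' : S ⊆ S') : w' = w :=
  h.2.2.2 w' h'.2.2.1 fun hw' => h'.2.1 (hSS' hw')

lemma zForceValid.eq_of_monotone {ι : Type*} [LinearOrder ι] {S : ι → Set V} (hS : Monotone S)
    {i j : ι} {u w w' : V} (h : zForceValid H (S i) u w) (h' : zForceValid H (S j) u w') :
    w = w' := by
  rcases le_total i j with hij | hji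
  · exact (h.eq_of_subset h' (hS hij)).symm
  · exact h'.eq_of_subset h (hS hji)

/-- A standard force in `H` is, in the spanning subgraph `G`, a standard force or a hop. -/
lemma zfRule_of_le (hGH : G ≤ H) {S blue : Set V} (hS : S ⊆ blue) {u w : V}
    (huniq : ∀ x, H.Adj u x → x ∉ S → x = w) :
    (G.Adj u w ∧ ∀ x, G.Adj u x → x ∉ blue → x = w) ∨ ∀ x, G.Adj u x → x ∈ blue := by
  by_cases huw : G.Adj u w
  · exact .inl ⟨huw, fun x hx hxb => huniq x (hGH hx) fun hxS => hxb (hS hxS)⟩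
  · exact .inr fun x hx =>
      by_contra fun hxb => huw (huniq x (hGH hx) (fun hxS => hxb (hS hxS)) ▸ hx)

/-- The forces `f w → w`, `w ∈ W`, performed in order of increasing `τ w`. -/
lemma exists_zfValidList_of_zForceValid [DecidableEq V] {ι : Type*} [LinearOrder ι]
    (hGH : G ≤ H) {S : ι → Set V} (hS : Monotone S) {τ : V → ι} {f : V → V} (W : Finset V)
    (hf : ∀ w ∈ W, zForceValid H (S (τ w)) (f w) w) {blue forced : Set V}
    (hblue : ∀ x, x ∈ blue ↔ x ∉ W) (hforced : ∀ w ∈ W, f w ∉ forced) :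
    ∃ L : List (V × V), zfValidList G blue forced L ∧ ∀ p, p ∈ L ↔ p.2 ∈ W ∧ p.1 = f p.2 := by
  induction W using Finset.strongInduction generalizing blue forced with
  | H W ih =>
  rcases W.eq_empty_or_nonempty with rfl | hne
  · exact ⟨[], trivial, by simp⟩
  obtain ⟨w, hw, hmin⟩ := W.exists_min_image τ hne
  obtain ⟨hfw, hwS, -, huniq⟩ := hf w hw
  -- the remaining vertices are forced no earlier than `w`, so are white at time `τ w`
  have hSw : S (τ w) ⊆ blue := fun x hx =>
    (hblue x).2 fun hxW => (hf x hxW).2.1 (hS (hmin x hxW) hx)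
  have hforced' : ∀ x ∈ W.erase w, f x ∉ insert (f w) forced := by
    intro x hx hfx
    obtain ⟨hxw, hxW⟩ := Finset.mem_erase.1 hx
    rcases Set.mem_insert_iff.1 hfx with hfx | hfx
    · exact hxw ((hf x hxW).eq_of_monotone hS (hfx ▸ hf w hw))
    · exact hforced x hxW hfx
  obtain ⟨L, hL, hmem⟩ := ih (W.erase w) (W.erase_ssubset hw)
    (fun x hx => hf x (W.mem_of_mem_erase hx))
    (fun x => by rw [Set.mem_insert_iff, hblue, Finset.mem_erase]; tauto) hforced'
  refine ⟨(f w, w) :: L, ⟨⟨hSw hfw, fun h => (hblue w).1 h hw, hforced w hw,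
    zfRule_of_le hGH hSw huniq⟩, hL⟩, fun ⟨a, b⟩ => ?_⟩
  simp only [List.mem_cons, hmem, Finset.mem_erase, Prod.mk.injEq]
  constructor
  · rintro (⟨rfl, rfl⟩ | ⟨⟨-, hb⟩, hab⟩)
    · exact ⟨hw, rfl⟩
    · exact ⟨hb, hab⟩
  · rintro ⟨hb, rfl⟩
    by_cases hbw : b = w
    · exact .inl ⟨hbw ▸ rfl, hbw⟩
    · exact .inr ⟨⟨hbw, hb⟩, rfl⟩

section StandardToZF

variable {B : Set V} {τ : V → ℕ} {f : V → V}

lemma zStep_iterate_subset_zfBlueAt (hGH : G ≤ H)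
    (hf : ∀ w ∉ B, zForceValid H ((zStep H)^[τ w] B) (f w) w) (t : ℕ) :
    (zStep H)^[t] B ⊆ zfBlueAt G {p | p.2 ∉ B ∧ p.1 = f p.2} B t := by
  set F : Set (V × V) := {p | p.2 ∉ B ∧ p.1 = f p.2}
  induction t with
  | zero => exact subset_rfl
  | succ n ih =>
    intro x hx
    by_cases hxn : x ∈ zfBlueAt G F B n
    · exact .inl hxn
    have hxB : x ∉ B := fun h => hxn (zfBlueAt_mono G F B n.zero_le h)
    obtain ⟨hfx, hxS, -, huniq⟩ := hf x hxB
    have hτ : τ x ≤ n := by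
      by_contra! h
      exact hxS (zStep_iterate_mono H B h hx)
    have hsub : (zStep H)^[τ x] B ⊆ zfBlueAt G F B n := (zStep_iterate_mono H B hτ).trans ih
    refine .inr ⟨f x, ⟨hxB, rfl⟩, hsub hfx, hxn, ?_, zfRule_of_le hGH hsub huniq⟩
    rintro w ⟨hwB, hfw⟩ hw
    have hxw : x = w := (hf x hxB).eq_of_monotone (zStep_iterate_mono H B) (hfw ▸ hf w hwB)
    exact absurd (hxw ▸ hw) hxn

lemma isZFForceSet_of_zForceValid [Fintype V] (hGH : G ≤ H)
    (hf : ∀ w ∉ B, zForceValid H ((zStep H)^[τ w] B) (f w) w) :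
    IsZFForceSet G B {p | p.2 ∉ B ∧ p.1 = f p.2} := by
  classical
  obtain ⟨L, hL, hmem⟩ := exists_zfValidList_of_zForceValid hGH (zStep_iterate_mono H B)
    (Finset.univ.filter (· ∉ B)) (by simpa using hf) (blue := B) (forced := ∅) (by simp) (by simp)
  have hend : endBlue B L = Set.univ := Set.eq_univ_of_forall fun x => by
    by_cases hx : x ∈ B
    · exact .inl hx
    · exact .inr ⟨f x, (hmem _).2 ⟨by simpa using hx, rfl⟩⟩
  refine ⟨L, hL, fun u w h => h.2.1 (hend ▸ Set.mem_univ w), ?_⟩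
  ext p
  simp [hmem]

end StandardToZF

lemma exists_isZFForceSet_of_zStep_iterate_eq_univ [Fintype V] (hGH : G ≤ H) {B : Set V}
    {T : ℕ} (hT : (zStep H)^[T] B = Set.univ) :
    ∃ F, IsZFForceSet G B F ∧ B ∪ {w | ∃ u, (u, w) ∈ F} = Set.univ ∧
      ∀ t, (zStep H)^[t] B ⊆ zfBlueAt G F B t := by
  have hforcer : ∀ w, ∃ m u, w ∉ B → zForceValid H ((zStep H)^[m] B) u w := fun w => by
    by_cases hwB : w ∈ B
    · exact ⟨0, w, absurd hwB⟩
    · obtain ⟨m, u, h⟩ := exists_zForceValid_of_mem_zStep_iterate (hT ▸ Set.mem_univ w) hwB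
      exact ⟨m, u, fun _ => h⟩
  choose τ f hf using hforcer
  refine ⟨_, isZFForceSet_of_zForceValid hGH hf, Set.eq_univ_of_forall fun x => ?_,
    zStep_iterate_subset_zfBlueAt hGH hf⟩
  by_cases hx : x ∈ B
  · exact .inl hx
  · exact .inr ⟨f x, hx, rfl⟩

lemma ZFnum_le_Znum [Fintype V] (hGH : G ≤ H) : ZFnum G ≤ Znum H := by
  refine le_csInf ⟨_, Set.univ, ⟨0, rfl⟩, rfl⟩ ?_
  rintro _ ⟨B, ⟨T, hT⟩, rfl⟩
  obtain ⟨F, hF, hcover, -⟩ := exists_isZFForceSet_of_zStep_iterate_eq_univ hGH hT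
  exact Nat.sInf_le ⟨B, ⟨F, hF, hcover⟩, rfl⟩

lemma ptZFgraph_le_ptZgraph [Fintype V] (hGH : G ≤ H) (hZ : Znum H = ZFnum G) :
    ptZFgraph G ≤ ptZgraph H := by
  refine le_sInf ?_
  rintro _ ⟨B, -, hB, rfl⟩
  refine le_sInf ?_
  rintro _ ⟨t, rfl, ht⟩
  obtain ⟨F, hF, hcover, hsub⟩ := exists_isZFForceSet_of_zStep_iterate_eq_univ hGH ht
  calc ptZFgraph G ≤ ptZF G B := sInf_le ⟨B, ⟨F, hF, hcover⟩, hB.trans hZ, rfl⟩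
    _ ≤ ptZFofF G F B := sInf_le ⟨F, hF, rfl⟩
    _ ≤ t := sInf_le ⟨t, rfl, Set.univ_subset_iff.1 (ht ▸ hsub t)⟩

lemma exists_supergraph_ptZgraph_le [Fintype V] {B : Set V} (hB : B.ncard = ZFnum G)
    {F : Set (V × V)} (hF : IsZFForceSet G B F) {t : ℕ} (ht : zfBlueAt G F B t = Set.univ) :
    ∃ H, G ≤ H ∧ Znum H = ZFnum G ∧ ptZgraph H ≤ t := by
  set H := G ⊔ fromRel fun a b => (a, b) ∈ F
  have hHt : (zStep H)^[t] B = Set.univ :=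
    Set.univ_subset_iff.1 (ht ▸ hF.zfBlueAt_subset_zStep_iterate t)
  have hZ : Znum H = ZFnum G :=
    le_antisymm (hB ▸ Nat.sInf_le ⟨B, ⟨t, hHt⟩, rfl⟩) (ZFnum_le_Znum le_sup_left)
  refine ⟨H, le_sup_left, hZ, ?_⟩
  calc ptZgraph H ≤ ptZ H B := sInf_le ⟨B, ⟨t, hHt⟩, hB.trans hZ.symm, rfl⟩
    _ ≤ t := sInf_le ⟨t, rfl, hHt⟩

/-- `pt_⌊Z⌋(G) = min{ pt_Z(H) : H spanning supergraph of G, Z(H) = ⌊Z⌋(G) }`. -/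
theorem stmt1 {V : Type*} [Fintype V] (G : SimpleGraph V) :
    ptZFgraph G =
      sInf {n : ℕ∞ | ∃ H : SimpleGraph V, G ≤ H ∧ Znum H = ZFnum G ∧ n = ptZgraph H} := by
  apply le_antisymm
  · refine le_sInf ?_
    rintro _ ⟨H, hGH, hZ, rfl⟩
    exact ptZFgraph_le_ptZgraph hGH hZ
  refine le_sInf ?_
  rintro _ ⟨B, -, hB, rfl⟩
  refine le_sInf ?_
  rintro _ ⟨F, hF, rfl⟩
  refine le_sInf ?_
  rintro _ ⟨t, rfl, ht⟩
  obtain ⟨H, hGH, hZ, hpt⟩ := exists_supergraph_ptZgraph_le hB hF ht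
  exact sInf_le_of_le ⟨H, hGH, hZ, rfl⟩ hpt

end ZFT
end

section
/- For every n ≥ 1, the path P_n on n vertices satisfies th_⌊Z⌋(P_n) = ⌈2√n − 1⌉. -/
open SimpleGraph

namespace ZFT

variable {V : Type*} {α : Type*} {β : Type*}

/-!
In `⌊Z⌋` forcing every vertex forces at most once, so from an initial set `B` at most `|B|`
new vertices turn blue per time step: colouring `P_n` in time `t` needs `n ≤ |B| (t + 1)`,
and `4 |B| (t + 1) ≤ (|B| + t + 1)²` gives `|B| + t ≥ 2√n - 1`.

Conversely, start from the first `k` vertices and colour the `j`-th block of `k` consecutive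
vertices at time `j`, vertex `k j + r` being forced by its mirror image `k j - 1 - r`: for
`r = 0` this is a path force, and for `r > 0` a hop, since both neighbours of `k j - 1 - r` are
already blue. With `k + (t + 1) = ⌈2√n - 1⌉ + 1` split evenly, `k (t + 1) ≥ n`.
-/

section Throttling

variable {G : SimpleGraph V} {B : Set V} {F : Set (V × V)}

lemma zfValidList_nodup_map_fst :
    ∀ {blue forced : Set V} {L : List (V × V)}, zfValidList G blue forced L →
      (∀ p ∈ L, p.1 ∉ forced) ∧ (L.map Prod.fst).Nodup
  | _, _, [], _ => by simp
  | _, _, p :: L, ⟨hp, hL⟩ => by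
    obtain ⟨hfresh, hnodup⟩ := zfValidList_nodup_map_fst hL
    refine ⟨?_, List.nodup_cons.2 ⟨?_, hnodup⟩⟩
    · intro q hq
      obtain rfl | hq := List.mem_cons.1 hq
      · exact hp.2.2.1
      · exact fun hqf => hfresh q hq (Set.mem_insert_of_mem _ hqf)
    · simp only [List.mem_map, not_exists, not_and]
      exact fun q hq hqp => hfresh q hq (hqp ▸ Set.mem_insert _ _)

lemma IsZFForceSet.injOn_fst (hF : IsZFForceSet G B F) : Set.InjOn Prod.fst F := by
  obtain ⟨L, hL, -, rfl⟩ := hF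
  exact List.inj_on_of_nodup_map (zfValidList_nodup_map_fst hL).2

lemma exists_source_of_mem_zfBlueAt_succ {t : ℕ} {w : V}
    (hw : w ∈ zfBlueAt G F B (t + 1)) (hwB : w ∉ B) : ∃ v ∈ zfBlueAt G F B t, (v, w) ∈ F := by
  induction t with
  | zero =>
    obtain hw | ⟨v, hvw, hv, -⟩ := hw
    · exact absurd hw hwB
    · exact ⟨v, hv, hvw⟩
  | succ t ih =>
    obtain hw | ⟨v, hvw, hv, -⟩ := hw
    · obtain ⟨v, hv, hvw⟩ := ih hw
      exact ⟨v, Set.mem_union_left _ hv, hvw⟩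
    · exact ⟨v, hv, hvw⟩

/-- Every vertex forces at most once, so the vertices of `zfBlueAt G F B (t + 1) \ B` have
distinct sources in `zfBlueAt G F B t`. -/
lemma ncard_zfBlueAt_le [Finite V] (hF : IsZFForceSet G B F) (t : ℕ) :
    (zfBlueAt G F B t).ncard ≤ B.ncard * (t + 1) := by
  induction t with
  | zero => simp [zfBlueAt]
  | succ t ih =>
    set S := zfBlueAt G F B t
    have hnew : zfBlueAt G F B (t + 1) ⊆ B ∪ Prod.snd '' {p ∈ F | p.1 ∈ S} := by
      intro w hw
      by_cases hwB : w ∈ B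
      · exact Or.inl hwB
      · obtain ⟨v, hv, hvw⟩ := exists_source_of_mem_zfBlueAt_succ hw hwB
        exact Or.inr ⟨(v, w), ⟨hvw, hv⟩, rfl⟩
    have hsources : {p ∈ F | p.1 ∈ S}.ncard ≤ S.ncard :=
      Set.ncard_le_ncard_of_injOn Prod.fst (fun p hp => hp.2)
        (hF.injOn_fst.mono fun p hp => hp.1)
    calc (zfBlueAt G F B (t + 1)).ncard
        ≤ (B ∪ Prod.snd '' {p ∈ F | p.1 ∈ S}).ncard := Set.ncard_le_ncard hnew
      _ ≤ B.ncard + (Prod.snd '' {p ∈ F | p.1 ∈ S}).ncard := Set.ncard_union_le _ _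
      _ ≤ B.ncard + S.ncard := by grw [Set.ncard_image_le, hsources]
      _ ≤ B.ncard * (t + 1 + 1) := by rw [mul_add_one]; omega

lemma thZF_le_of_isZFForceSet {t : ℕ} (hF : IsZFForceSet G B F)
    (ht : zfBlueAt G F B t = Set.univ) : thZF G B ≤ B.ncard + t := by
  have hF' : ptZF G B ≤ ptZFofF G F B := by rw [ptZF]; exact sInf_le ⟨F, hF, rfl⟩
  have ht' : ptZFofF G F B ≤ t := by rw [ptZFofF]; exact sInf_le ⟨t, rfl, ht⟩
  exact add_le_add_right (hF'.trans ht') _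

lemma le_thZF_of_forall {c : ℕ∞}
    (h : ∀ F t, IsZFForceSet G B F → zfBlueAt G F B t = Set.univ → c ≤ B.ncard + t) :
    c ≤ thZF G B := by
  rw [thZF, ptZF, ENat.add_sInf]
  refine le_iInf₂ ?_
  rintro _ ⟨F, hF, rfl⟩
  rw [ptZFofF, ENat.add_sInf]
  refine le_iInf₂ ?_
  rintro _ ⟨t, rfl, ht⟩
  exact h F t hF ht

lemma le_thZFgraph_of_forall_card_le_mul [Finite V] {c : ℕ}
    (h : ∀ k t : ℕ, Nat.card V ≤ k * (t + 1) → c ≤ k + t) : (c : ℕ∞) ≤ thZFgraph G := by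
  refine le_sInf ?_
  rintro _ ⟨B, rfl⟩
  refine le_thZF_of_forall fun F t hF ht => ?_
  have hcard := ncard_zfBlueAt_le hF t
  rw [ht, Set.ncard_univ] at hcard
  exact_mod_cast h _ _ hcard

end Throttling

lemma toNat_ceil_two_mul_sqrt_sub_one_le_iff (n m : ℕ) :
    (⌈2 * Real.sqrt n - 1⌉).toNat ≤ m ↔ 4 * n ≤ (m + 1) ^ 2 := by
  have hsqrt : 2 * Real.sqrt n = Real.sqrt (4 * n) := by
    rw [Real.sqrt_mul (by norm_num), show (4 : ℝ) = 2 ^ 2 by norm_num,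
      Real.sqrt_sq (by norm_num)]
  rw [Int.toNat_le, Int.ceil_le, sub_le_iff_le_add, hsqrt, Real.sqrt_le_iff]
  norm_cast
  simp

/-- AM–GM: `4 k (t + 1) ≤ (k + t + 1)²`. -/
lemma toNat_ceil_two_mul_sqrt_sub_one_le_of_le_mul {n k t : ℕ} (h : n ≤ k * (t + 1)) :
    (⌈2 * Real.sqrt n - 1⌉).toNat ≤ k + t := by
  rw [toNat_ceil_two_mul_sqrt_sub_one_le_iff]
  nlinarith [sq_nonneg ((k : ℤ) - (t + 1))]

/-- `k` and `t + 1` are the halves of `⌈2√n - 1⌉ + 1`, rounded down and up. -/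
lemma exists_add_eq_toNat_ceil_two_mul_sqrt_sub_one {n : ℕ} (hn : 1 ≤ n) :
    ∃ k t : ℕ, 0 < k ∧ k ≤ n ∧ n ≤ k * (t + 1) ∧ k + t = (⌈2 * Real.sqrt n - 1⌉).toNat := by
  set c := (⌈2 * Real.sqrt n - 1⌉).toNat
  have hc : 4 * n ≤ (c + 1) ^ 2 := (toNat_ceil_two_mul_sqrt_sub_one_le_iff n c).1 le_rfl
  have hcn : c ≤ n := by
    rw [toNat_ceil_two_mul_sqrt_sub_one_le_iff]
    nlinarith
  have hc0 : 0 < c := by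
    by_contra! h0
    have := (toNat_ceil_two_mul_sqrt_sub_one_le_iff n 0).1 h0
    omega
  refine ⟨(c + 1) / 2, c - (c + 1) / 2, by omega, by omega, ?_, by omega⟩
  rcases Nat.even_or_odd' (c + 1) with ⟨a, ha | ha⟩
  · rw [show (c + 1) / 2 = a by omega, show c - a + 1 = a by omega]
    nlinarith
  · rw [show (c + 1) / 2 = a by omega, show c - a + 1 = a + 1 by omega]
    nlinarith

section PathSchedule

variable {n k : ℕ}

/-- Vertex `x = k j + r` (`r < k`) is forced by `k j - 1 - r`, its mirror image across the left
end of its block of `k` consecutive vertices. -/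
def blockSource (k : ℕ) (x : Fin n) : Fin n :=
  ⟨k * (x / k) - 1 - x % k, by have := Nat.mul_div_le (x : ℕ) k; omega⟩

lemma blockSource_add_mod_add_one (hk : 0 < k) {x : Fin n} (hx : k ≤ x) :
    (blockSource k x : ℕ) + x % k + 1 = k * (x / k) := by
  have hmod := Nat.mod_lt (x : ℕ) hk
  have hblock : k ≤ k * (x / k) := Nat.le_mul_of_pos_right k (Nat.div_pos hx hk)
  simp only [blockSource]
  omega

lemma blockSource_div (hk : 0 < k) {x : Fin n} (hx : k ≤ x) :
    (blockSource k x : ℕ) / k = x / k - 1 := by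
  have hsrc := blockSource_add_mod_add_one hk hx
  have hmod := Nat.mod_lt (x : ℕ) hk
  have hpos := Nat.div_pos hx hk
  refine Nat.div_eq_of_lt_le ?_ ?_
  · rw [Nat.sub_mul, one_mul, mul_comm]; omega
  · rw [Nat.sub_add_cancel hpos, mul_comm]; omega

lemma blockSource_injOn (hk : 0 < k) : Set.InjOn (blockSource k) {x : Fin n | k ≤ x} := by
  intro x hx y hy hxy
  have hdiv := blockSource_div hk hx
  rw [hxy, blockSource_div hk hy] at hdiv
  have hx' := blockSource_add_mod_add_one hk hx
  have hy' := blockSource_add_mod_add_one hk hy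
  rw [hxy] at hx'
  have hblock : (x : ℕ) / k = y / k := by
    have := Nat.div_pos hx hk
    have := Nat.div_pos hy hk
    omega
  have hx'' := Nat.div_add_mod (x : ℕ) k
  have hy'' := Nat.div_add_mod (y : ℕ) k
  rw [hblock] at hx' hx''
  exact Fin.ext (by omega)

/-- `x` is the only possible white neighbour of its source, and if `x % k ≠ 0` both neighbours
of the source lie in the previous block, so the source hops. -/
lemma zfForceValid_blockSource (hk : 0 < k) {x : Fin n} (hx : k ≤ x) {blue forced : Set (Fin n)}
    (hblue : ∀ z : Fin n, (z : ℕ) < k * (x / k) → z ∈ blue) (hxb : x ∉ blue)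
    (hforced : blockSource k x ∉ forced) :
    zfForceValid (pathGraph n) blue forced (blockSource k x) x := by
  have hsrc := blockSource_add_mod_add_one hk hx
  refine ⟨hblue _ (by omega), hxb, hforced, ?_⟩
  rcases Nat.eq_zero_or_pos ((x : ℕ) % k) with hr | hr
  · refine Or.inl ⟨pathGraph_adj.2 (Or.inl (by have := Nat.div_add_mod (x : ℕ) k; omega)), ?_⟩
    intro z hz hzb
    rcases pathGraph_adj.1 hz with h | h
    · exact Fin.ext (by have := Nat.div_add_mod (x : ℕ) k; omega)
    · exact absurd (hblue z (by omega)) hzb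
  · refine Or.inr fun z hz => hblue z ?_
    rcases pathGraph_adj.1 hz with h | h <;> omega

def blockForces (k m : ℕ) : List (Fin n × Fin n) :=
  ((List.finRange n).drop m).map fun x => (blockSource k x, x)

lemma mem_blockForces {m : ℕ} {p : Fin n × Fin n} :
    p ∈ (blockForces k m : List (Fin n × Fin n)) ↔ m ≤ p.2 ∧ p.1 = blockSource k p.2 := by
  obtain ⟨u, x⟩ := p
  simp only [blockForces, List.mem_map, List.mem_drop_iff_getElem, List.getElem_finRange,
    Prod.mk.injEq]
  constructor
  · rintro ⟨_, ⟨j, hj, rfl⟩, rfl, rfl⟩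
    simp
  · rintro ⟨hx, rfl⟩
    exact ⟨x, ⟨x - m, by simp; omega, Fin.ext (by simp; omega)⟩, rfl, rfl⟩

lemma blockForces_of_lt {m : ℕ} (hm : m < n) :
    (blockForces k m : List (Fin n × Fin n)) =
      (blockSource k ⟨m, hm⟩, ⟨m, hm⟩) :: blockForces k (m + 1) := by
  rw [blockForces, List.drop_eq_getElem_cons (by simpa using hm)]
  simp [blockForces]

lemma zfValidList_blockForces (hk : 0 < k) {m : ℕ} (hkm : k ≤ m) {forced : Set (Fin n)}
    (hforced : ∀ x : Fin n, m ≤ x → blockSource k x ∉ forced) :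
    zfValidList (pathGraph n) {z | (z : ℕ) < m} forced (blockForces k m) := by
  induction h : n - m generalizing m forced with
  | zero =>
    rw [blockForces, List.drop_eq_nil_of_le (by simp; omega)]
    trivial
  | succ d ih =>
    have hmn : m < n := by omega
    rw [blockForces_of_lt hmn]
    refine ⟨zfForceValid_blockSource hk hkm (fun z hz => ?_) (by simp) (hforced _ le_rfl), ?_⟩
    · have := Nat.mul_div_le m k
      change (z : ℕ) < k * (m / k) at hz
      change (z : ℕ) < m
      omega
    · have hblue : insert ⟨m, hmn⟩ {z : Fin n | (z : ℕ) < m} = {z : Fin n | (z : ℕ) < m + 1} := by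
        ext z
        simp [Fin.ext_iff]
        omega
      rw [hblue]
      refine ih (by omega) (fun x hx hmem => ?_) (by omega)
      rcases Set.mem_insert_iff.1 hmem with heq | hmem
      · have := congrArg Fin.val (blockSource_injOn hk (show k ≤ (x : ℕ) by omega) hkm heq)
        simp only at this
        omega
      · exact hforced x (by omega) hmem

lemma isZFForceSet_blockForces (hk : 0 < k) :
    IsZFForceSet (pathGraph n) {x | (x : ℕ) < k} {p | p ∈ blockForces k k} := by
  refine ⟨blockForces k k, zfValidList_blockForces hk le_rfl fun _ _ => id,
    fun u w hvalid => hvalid.2.1 ?_, rfl⟩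
  by_cases hw : (w : ℕ) < k
  · exact Or.inl hw
  · exact Or.inr ⟨blockSource k w, mem_blockForces.2 ⟨not_lt.1 hw, rfl⟩⟩

lemma zfBlueAt_blockForces (hk : 0 < k) (t : ℕ) :
    zfBlueAt (pathGraph n) {p | p ∈ blockForces k k} {x | (x : ℕ) < k} t =
      {x : Fin n | (x : ℕ) < k * (t + 1)} := by
  induction t with
  | zero => simp [zfBlueAt]
  | succ t ih =>
    rw [zfBlueAt, ih]
    ext x
    simp only [Set.mem_union, Set.mem_ofPred_eq, mem_blockForces]
    constructor
    · rintro (hx | ⟨_, ⟨hkx, rfl⟩, hsrc, -⟩)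
      · nlinarith
      · rw [mul_comm, ← Nat.div_lt_iff_lt_mul hk, blockSource_div hk hkx] at hsrc
        have := Nat.div_pos hkx hk
        rw [mul_comm, ← Nat.div_lt_iff_lt_mul hk]
        omega
    · intro hx
      by_cases hold : (x : ℕ) < k * (t + 1)
      · exact Or.inl hold
      have hkx : k ≤ (x : ℕ) := le_trans (Nat.le_mul_of_pos_right k t.succ_pos) (not_lt.1 hold)
      have hblock : (x : ℕ) / k = t + 1 :=
        Nat.div_eq_of_lt_le (by rw [mul_comm]; omega) (by rw [mul_comm]; exact hx)
      have hvalid := zfForceValid_blockSource hk hkx (blue := {z | (z : ℕ) < k * (t + 1)})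
        (forced := ∅) (fun z hz => by rw [hblock] at hz; exact hz) hold (Set.notMem_empty _)
      refine Or.inr ⟨blockSource k x, ⟨hkx, rfl⟩, hvalid.1, hold, ?_, hvalid.2.2.2⟩
      rintro w ⟨hkw, hsrc⟩ hw
      rw [blockSource_injOn hk hkw hkx hsrc.symm] at hw
      exact absurd hw hold

lemma thZF_pathGraph_le (hk : 0 < k) (hkn : k ≤ n) {t : ℕ} (hnt : n ≤ k * (t + 1)) :
    thZF (pathGraph n) {x | (x : ℕ) < k} ≤ k + t := by
  have hall : zfBlueAt (pathGraph n) {p | p ∈ blockForces k k} {x | (x : ℕ) < k} t =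
      Set.univ := by
    rw [zfBlueAt_blockForces hk]
    exact Set.eq_univ_of_forall fun x => x.isLt.trans_le hnt
  have hcard : ({x | (x : ℕ) < k} : Set (Fin n)).ncard = k := by
    rw [Set.ncard_eq_toFinset_card', Set.toFinset_ofPred, Fin.card_filter_val_lt,
      min_eq_right hkn]
  simpa [hcard] using thZF_le_of_isZFForceSet (isZFForceSet_blockForces hk) hall

end PathSchedule

/-- `th_⌊Z⌋(P_n) = ⌈2√n − 1⌉` for all `n ≥ 1`. -/
theorem stmt6 (n : ℕ) (hn : 1 ≤ n) :
    thZFgraph (SimpleGraph.pathGraph n) = ((⌈2 * Real.sqrt n - 1⌉).toNat : ℕ∞) := by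
  apply le_antisymm
  · obtain ⟨k, t, hk, hkn, hnt, hkt⟩ := exists_add_eq_toNat_ceil_two_mul_sqrt_sub_one hn
    calc thZFgraph (pathGraph n) ≤ thZF (pathGraph n) {x | (x : ℕ) < k} := sInf_le ⟨_, rfl⟩
      _ ≤ k + t := thZF_pathGraph_le hk hkn hnt
      _ = _ := by rw [← hkt, Nat.cast_add]
  · refine le_thZFgraph_of_forall_card_le_mul fun k t hcard => ?_
    rw [Nat.card_fin] at hcard
    exact toNat_ceil_two_mul_sqrt_sub_one_le_of_le_mul hcard

end ZFT
end
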